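/- arXiv:2003.09413 — 2 statements merged into one kernel-verified Lean document; each statement's English description precedes it below -/
import Mathlib

section
/- Let {f_n}_{n=1}^∞ be a sequence in a complex Hilbert space H such that M = {f_n + f_{n+1}}_{n=1}^∞ and N = {f_n − f_{n+1}}_{n=1}^∞ are both frames for H. Then F = {f_n}_{n=1}^∞ is a frame for H, and the frame operators satisfy 4 S_F f = S_M f + S_N f + 2⟨f, f_1⟩ f_1 for all f ∈ H. -/
/-!
The parallelogram law gives, for each `n`,
`|⟨x, fₙ + fₙ₊₁⟩|² + |⟨x, fₙ - fₙ₊₁⟩|² = 2 |⟨x, fₙ⟩|² + 2 |⟨x, fₙ₊₁⟩|²`,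
and summing over `n` counts every `|⟨x, fₙ⟩|²` four times except `|⟨x, f₀⟩|²`, which is counted
twice. This yields both frame bounds for `F`. The same bookkeeping applied to the vector identity
`⟨x, u + v⟩ (u + v) + ⟨x, u - v⟩ (u - v) = 2 ⟨x, u⟩ u + 2 ⟨x, v⟩ v` gives the relation between
the frame operators; their series converge because a Bessel sequence sends square-summable
coefficients to summable series.
-/

/-- A sequence `g` in a complex Hilbert space is a frame. -/
def IsFrame {H : Type*} [NormedAddCommGroup H] [InnerProductSpace ℂ H]
    (g : ℕ → H) : Prop :=
  ∃ A B : ℝ, 0 < A ∧ 0 < B ∧ ∀ x : H,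
    Summable (fun n => ‖(inner ℂ x (g n) : ℂ)‖ ^ 2) ∧
    A * ‖x‖ ^ 2 ≤ ∑' n, ‖(inner ℂ x (g n) : ℂ)‖ ^ 2 ∧
    ∑' n, ‖(inner ℂ x (g n) : ℂ)‖ ^ 2 ≤ B * ‖x‖ ^ 2

/-- The frame operator of a sequence `g`: `S x = ∑ₙ ⟨x, gₙ⟩ gₙ`
(in Mathlib's convention, `⟨x, gₙ⟩ = inner (g n) x`). -/
noncomputable def frameOp {H : Type*} [NormedAddCommGroup H] [InnerProductSpace ℂ H]
    (g : ℕ → H) (x : H) : H :=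
  ∑' n, (inner ℂ (g n) x : ℂ) • g n

open scoped InnerProductSpace

theorem tsum_add_succ_eq {G : Type*} [AddCommGroup G] [TopologicalSpace G]
    [IsTopologicalAddGroup G] [T2Space G] {a : ℕ → G} (ha : Summable a) :
    ∑' n, (a n + a (n + 1)) = 2 • ∑' n, a n - a 0 := by
  rw [ha.tsum_add ((summable_nat_add_iff 1).2 ha), ha.tsum_eq_zero_add]
  abel

theorem summable_of_nonneg_of_summable_add_succ {u : ℕ → ℝ} (hu : ∀ n, 0 ≤ u n)
    (h : Summable fun n => u n + u (n + 1)) : Summable u :=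
  h.of_nonneg_of_le hu fun n => le_add_of_nonneg_right (hu (n + 1))

section Bessel

variable {ι E : Type*} [NormedAddCommGroup E] [InnerProductSpace ℂ E]

theorem norm_sum_smul_sq_le_of_bessel {g : ι → E} {B : ℝ} (hB : 0 ≤ B)
    (hg : ∀ (x : E) (t : Finset ι), ∑ n ∈ t, ‖⟪x, g n⟫_ℂ‖ ^ 2 ≤ B * ‖x‖ ^ 2)
    (c : ι → ℂ) (t : Finset ι) :
    ‖∑ n ∈ t, c n • g n‖ ^ 2 ≤ B * ∑ n ∈ t, ‖c n‖ ^ 2 := by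
  set v := ∑ n ∈ t, c n • g n
  set S := ∑ n ∈ t, ‖c n‖ ^ 2
  have hinner : ‖v‖ ^ 2 ≤ ∑ n ∈ t, ‖c n‖ * ‖⟪v, g n⟫_ℂ‖ :=
    calc ‖v‖ ^ 2 = ‖⟪v, v⟫_ℂ‖ := by simp [inner_self_eq_norm_sq_to_K]
      _ = ‖∑ n ∈ t, c n * ⟪v, g n⟫_ℂ‖ := by simp only [v, inner_sum, inner_smul_right]
      _ ≤ ∑ n ∈ t, ‖c n‖ * ‖⟪v, g n⟫_ℂ‖ := (norm_sum_le _ _).trans_eq (by simp only [norm_mul])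
  have key : (‖v‖ ^ 2) ^ 2 ≤ S * (B * ‖v‖ ^ 2) :=
    calc (‖v‖ ^ 2) ^ 2 ≤ (∑ n ∈ t, ‖c n‖ * ‖⟪v, g n⟫_ℂ‖) ^ 2 :=
          pow_le_pow_left₀ (by positivity) hinner 2
      _ ≤ S * ∑ n ∈ t, ‖⟪v, g n⟫_ℂ‖ ^ 2 := Finset.sum_mul_sq_le_sq_mul_sq _ _ _
      _ ≤ S * (B * ‖v‖ ^ 2) := mul_le_mul_of_nonneg_left (hg v t) (by positivity)
  rcases (sq_nonneg ‖v‖).eq_or_lt with h | h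
  · rw [← h]
    positivity
  · nlinarith

theorem summable_smul_of_norm_sum_smul_sq_le [CompleteSpace E] {g : ι → E} {c : ι → ℂ} {B : ℝ}
    (hB : 0 ≤ B) (hc : Summable fun n => ‖c n‖ ^ 2)
    (hg : ∀ t : Finset ι, ‖∑ n ∈ t, c n • g n‖ ^ 2 ≤ B * ∑ n ∈ t, ‖c n‖ ^ 2) :
    Summable fun n => c n • g n := by
  refine summable_iff_vanishing_norm.2 fun ε hε => ?_
  obtain ⟨s, hs⟩ := summable_iff_vanishing_norm.1 hc (ε ^ 2 / (B + 1)) (by positivity)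
  refine ⟨s, fun t ht => ?_⟩
  have htail : ∑ n ∈ t, ‖c n‖ ^ 2 < ε ^ 2 / (B + 1) := (le_abs_self _).trans_lt (hs t ht)
  have hsq : ‖∑ n ∈ t, c n • g n‖ ^ 2 < ε ^ 2 :=
    calc ‖∑ n ∈ t, c n • g n‖ ^ 2 ≤ B * ∑ n ∈ t, ‖c n‖ ^ 2 := hg t
      _ ≤ (B + 1) * ∑ n ∈ t, ‖c n‖ ^ 2 := by gcongr; linarith
      _ < (B + 1) * (ε ^ 2 / (B + 1)) := by gcongr
      _ = ε ^ 2 := by field_simp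
  exact lt_of_pow_lt_pow_left₀ 2 hε.le hsq

theorem IsFrame.summable_inner_smul [CompleteSpace E] {g : ℕ → E} (hg : IsFrame g) (x : E) :
    Summable fun n => ⟪g n, x⟫_ℂ • g n := by
  obtain ⟨_, B, -, hB, hbounds⟩ := hg
  have hbessel : ∀ (y : E) (t : Finset ℕ), ∑ n ∈ t, ‖⟪y, g n⟫_ℂ‖ ^ 2 ≤ B * ‖y‖ ^ 2 := fun y t =>
    ((hbounds y).1.sum_le_tsum t fun n _ => by positivity).trans (hbounds y).2.2
  refine summable_smul_of_norm_sum_smul_sq_le hB.le ?_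
    (norm_sum_smul_sq_le_of_bessel hB.le hbessel _)
  simpa only [norm_inner_symm] using (hbounds x).1

end Bessel

section AddSub

variable {E : Type*} [NormedAddCommGroup E] [InnerProductSpace ℂ E] (x : E)

theorem norm_inner_add_sq_add_norm_inner_sub_sq (u v : E) :
    ‖⟪x, u + v⟫_ℂ‖ ^ 2 + ‖⟪x, u - v⟫_ℂ‖ ^ 2 = 2 * (‖⟪x, u⟫_ℂ‖ ^ 2 + ‖⟪x, v⟫_ℂ‖ ^ 2) := by
  rw [inner_add_right, inner_sub_right]
  exact parallelogram_law_with_norm ℂ _ _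

theorem inner_smul_add_add_inner_smul_sub (u v : E) :
    ⟪u + v, x⟫_ℂ • (u + v) + ⟪u - v, x⟫_ℂ • (u - v) = (2 : ℂ) • (⟪u, x⟫_ℂ • u + ⟪v, x⟫_ℂ • v) := by
  simp only [inner_add_left, inner_sub_left]
  module

variable {x} {f : ℕ → E}

theorem summable_norm_inner_sq_of_add_sub
    (hM : Summable fun n => ‖⟪x, f n + f (n + 1)⟫_ℂ‖ ^ 2)
    (hN : Summable fun n => ‖⟪x, f n - f (n + 1)⟫_ℂ‖ ^ 2) :
    Summable fun n => ‖⟪x, f n⟫_ℂ‖ ^ 2 := by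
  refine summable_of_nonneg_of_summable_add_succ (fun n => by positivity) ?_
  refine ((hM.add hN).div_const 2).congr fun n => ?_
  rw [norm_inner_add_sq_add_norm_inner_sub_sq]
  ring

theorem tsum_norm_inner_sq_add_add_tsum_norm_inner_sq_sub
    (hM : Summable fun n => ‖⟪x, f n + f (n + 1)⟫_ℂ‖ ^ 2)
    (hN : Summable fun n => ‖⟪x, f n - f (n + 1)⟫_ℂ‖ ^ 2) :
    ∑' n, ‖⟪x, f n + f (n + 1)⟫_ℂ‖ ^ 2 + ∑' n, ‖⟪x, f n - f (n + 1)⟫_ℂ‖ ^ 2 =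
      4 * ∑' n, ‖⟪x, f n⟫_ℂ‖ ^ 2 - 2 * ‖⟪x, f 0⟫_ℂ‖ ^ 2 := by
  rw [← hM.tsum_add hN]
  simp_rw [norm_inner_add_sq_add_norm_inner_sub_sq]
  rw [tsum_mul_left, tsum_add_succ_eq (summable_norm_inner_sq_of_add_sub hM hN)]
  ring

theorem frameOp_add_add_frameOp_sub (hf : Summable fun n => ⟪f n, x⟫_ℂ • f n)
    (hM : Summable fun n => ⟪f n + f (n + 1), x⟫_ℂ • (f n + f (n + 1)))
    (hN : Summable fun n => ⟪f n - f (n + 1), x⟫_ℂ • (f n - f (n + 1))) :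
    frameOp (fun n => f n + f (n + 1)) x + frameOp (fun n => f n - f (n + 1)) x =
      (2 : ℂ) • (2 • frameOp f x - ⟪f 0, x⟫_ℂ • f 0) := by
  unfold frameOp
  rw [← hM.tsum_add hN]
  simp_rw [inner_smul_add_add_inner_smul_sub]
  rw [tsum_const_smul'', tsum_add_succ_eq hf]

theorem IsFrame.of_add_sub (hM : IsFrame fun n => f n + f (n + 1))
    (hN : IsFrame fun n => f n - f (n + 1)) : IsFrame f := by
  obtain ⟨AM, BM, hAM, hBM, hM⟩ := hM
  obtain ⟨AN, BN, hAN, hBN, hN⟩ := hN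
  refine ⟨(AM + AN) / 4, (BM + BN + 2 * ‖f 0‖ ^ 2) / 4, by positivity, by positivity,
    fun x => ?_⟩
  obtain ⟨hMs, hMl, hMu⟩ := hM x
  obtain ⟨hNs, hNl, hNu⟩ := hN x
  have hsum := tsum_norm_inner_sq_add_add_tsum_norm_inner_sq_sub hMs hNs
  have h0 : ‖⟪x, f 0⟫_ℂ‖ ^ 2 ≤ ‖f 0‖ ^ 2 * ‖x‖ ^ 2 := by
    rw [← mul_pow, mul_comm]
    exact pow_le_pow_left₀ (norm_nonneg _) (norm_inner_le_norm x (f 0)) 2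
  refine ⟨summable_norm_inner_sq_of_add_sub hMs hNs, ?_, ?_⟩
  · linarith [sq_nonneg ‖⟪x, f 0⟫_ℂ‖]
  · linarith

end AddSub

theorem stmt3 {H : Type*} [NormedAddCommGroup H] [InnerProductSpace ℂ H]
    [CompleteSpace H] (f : ℕ → H)
    (hM : IsFrame (fun n => f n + f (n + 1)))
    (hN : IsFrame (fun n => f n - f (n + 1))) :
    IsFrame f ∧
      ∀ x : H,
        (4 : ℂ) • frameOp f x =
          frameOp (fun n => f n + f (n + 1)) x +
          frameOp (fun n => f n - f (n + 1)) x +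
          (2 : ℂ) • ((inner ℂ (f 0) x : ℂ) • f 0) := by
  have hF : IsFrame f := .of_add_sub hM hN
  refine ⟨hF, fun x => ?_⟩
  rw [frameOp_add_add_frameOp_sub (hF.summable_inner_smul x) (hM.summable_inner_smul x)
    (hN.summable_inner_smul x)]
  module
end

section
/- Let F = {f_n}_{n=1}^∞ be a Bessel sequence in a complex Hilbert space H represented by a bounded linear operator T ∈ B(H) (so T(f_n + f_{n+1}) = f_{n+2} for all n ≥ 1), and suppose M = {f_n + f_{n+1}}_{n=1}^∞ is a frame for H. Then T is injective if and only if ker T_{F'} ⊆ ker T_M, where F' = {f_{n+2}}_{n=1}^∞ and T_{F'}, T_M denote the synthesis operators of F' and M. -/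
/-- A sequence `g` in a complex Hilbert space is a Bessel sequence. -/
def IsBessel {H : Type*} [NormedAddCommGroup H] [InnerProductSpace ℂ H]
    (g : ℕ → H) : Prop :=
  ∃ B : ℝ, 0 < B ∧ ∀ x : H,
    Summable (fun n => ‖(inner ℂ x (g n) : ℂ)‖ ^ 2) ∧
    ∑' n, ‖(inner ℂ x (g n) : ℂ)‖ ^ 2 ≤ B * ‖x‖ ^ 2

/-- The kernel of the synthesis operator of a sequence `g`, viewed as the set of
square-summable scalar sequences `c` with `∑ₙ cₙ gₙ = 0`. -/
def synthKer {H : Type*} [NormedAddCommGroup H] [InnerProductSpace ℂ H]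
    (g : ℕ → H) : Set (ℕ → ℂ) :=
  {c | Memℓp c 2 ∧ HasSum (fun n => c n • g n) 0}

/-!
Write `M n = f n + f (n + 1)`. Since `T` is continuous, applying it termwise to an expansion
`∑ cₙ Mₙ = x` gives `∑ cₙ f (n + 2) = T x`. If `T` is injective, every `c ∈ ker T_{F'}` lies in
`ker T_M`, because `∑ cₙ Mₙ` converges (`M` is Bessel) and is sent to `0` by `T`. Conversely,
the frame operator `U* U` of `M` (with `U` its analysis operator) satisfies
`⟪U* U x, x⟫ = ‖U x‖² ≥ A ‖x‖²`, so it is invertible and every `x` is some `∑ cₙ Mₙ` with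
`c ∈ ℓ²`; if `T x = 0` then `c ∈ ker T_{F'}`, hence `c ∈ ker T_M` and `x = 0`.
-/

open scoped lp InnerProductSpace

theorem memℓp_two_iff_summable_sq {ι : Type*} {E : ι → Type*} [∀ i, NormedAddCommGroup (E i)]
    {c : ∀ i, E i} : Memℓp c 2 ↔ Summable fun i => ‖c i‖ ^ 2 := by
  simp [memℓp_gen_iff]

theorem lp.norm_sq_eq_tsum {ι : Type*} {E : ι → Type*} [∀ i, NormedAddCommGroup (E i)]
    (c : lp E 2) : ‖c‖ ^ 2 = ∑' i, ‖c i‖ ^ 2 := by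
  simpa using lp.norm_rpow_eq_tsum (p := 2) (by norm_num) c

section

open ContinuousLinearMap

variable {H : Type*} [NormedAddCommGroup H] [InnerProductSpace ℂ H] {g : ℕ → H}

theorem IsFrame.isBessel (hg : IsFrame g) : IsBessel g := by
  obtain ⟨_, B, _, hB, h⟩ := hg
  exact ⟨B, hB, fun x => ⟨(h x).1, (h x).2.2⟩⟩

theorem IsBessel.memℓp_inner (hg : IsBessel g) (x : H) : Memℓp (fun n => ⟪g n, x⟫_ℂ) 2 := by
  obtain ⟨B, _, h⟩ := hg
  refine memℓp_two_iff_summable_sq.2 ((h x).1.congr fun n => ?_)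
  rw [norm_inner_symm]

noncomputable def IsBessel.analysis (hg : IsBessel g) : H →L[ℂ] ℓ²(ℕ, ℂ) :=
  LinearMap.mkContinuousOfExistsBound
    { toFun := fun x => ⟨fun n => ⟪g n, x⟫_ℂ, hg.memℓp_inner x⟩
      map_add' := fun x y => by ext n; exact inner_add_right _ _ _
      map_smul' := fun a x => by ext n; exact inner_smul_right _ _ _ }
    (by
      obtain ⟨B, hB, h⟩ := hg
      refine ⟨√B, fun x => le_of_pow_le_pow_left₀ two_ne_zero (by positivity) ?_⟩
      rw [lp.norm_sq_eq_tsum, mul_pow, Real.sq_sqrt hB.le]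
      simpa [norm_inner_symm] using (h x).2)

@[simp]
theorem IsBessel.analysis_apply (hg : IsBessel g) (x : H) (n : ℕ) :
    hg.analysis x n = ⟪g n, x⟫_ℂ := rfl

theorem IsBessel.norm_analysis_sq (hg : IsBessel g) (x : H) :
    ‖hg.analysis x‖ ^ 2 = ∑' n, ‖⟪x, g n⟫_ℂ‖ ^ 2 := by
  simp [lp.norm_sq_eq_tsum, norm_inner_symm]

variable [CompleteSpace H]

theorem IsBessel.hasSum_adjoint_analysis (hg : IsBessel g) (c : ℓ²(ℕ, ℂ)) :
    HasSum (fun n => c n • g n) (hg.analysis.adjoint c) := by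
  convert (lp.hasSum_single (by norm_num) c).mapL hg.analysis.adjoint using 2 with n
  refine ext_inner_right ℂ fun x => ?_
  rw [adjoint_inner_left, lp.inner_single_left, inner_smul_left]
  simp [mul_comm]

theorem IsBessel.summable_smul (hg : IsBessel g) {c : ℕ → ℂ} (hc : Memℓp c 2) :
    Summable fun n => c n • g n :=
  (hg.hasSum_adjoint_analysis ⟨c, hc⟩).summable

theorem IsFrame.isUnit_adjoint_comp_analysis (hg : IsFrame g) :
    IsUnit (hg.isBessel.analysis.adjoint ∘L hg.isBessel.analysis) := by
  obtain ⟨A, B, hA, -, h⟩ := id hg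
  refine isUnit_of_forall_le_norm_inner_map _ (Real.toNNReal_pos.2 hA) fun x => ?_
  rw [comp_apply, adjoint_inner_left, inner_self_eq_norm_sq_to_K]
  norm_cast
  rw [Real.coe_toNNReal _ hA.le, abs_of_nonneg (by positivity), hg.isBessel.norm_analysis_sq]
  linarith [(h x).2.1]

theorem IsFrame.exists_hasSum (hg : IsFrame g) (x : H) :
    ∃ c : ℕ → ℂ, Memℓp c 2 ∧ HasSum (fun n => c n • g n) x := by
  obtain ⟨y, rfl⟩ := (isUnit_iff_bijective.1 hg.isUnit_adjoint_comp_analysis).2 x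
  exact ⟨_, (hg.isBessel.analysis y).2, hg.isBessel.hasSum_adjoint_analysis _⟩

end

theorem stmt18_general {H : Type*} [NormedAddCommGroup H] [InnerProductSpace ℂ H]
    [CompleteSpace H] (f : ℕ → H)
    (hM : IsFrame (fun n => f n + f (n + 1)))
    (T : H →L[ℂ] H)
    (hrep : ∀ n : ℕ, T (f n + f (n + 1)) = f (n + 2)) :
    Function.Injective T ↔
      synthKer (fun n => f (n + 2)) ⊆ synthKer (fun n => f n + f (n + 1)) := by
  have hT {c : ℕ → ℂ} {x : H} (hx : HasSum (fun n => c n • (f n + f (n + 1))) x) :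
      HasSum (fun n => c n • f (n + 2)) (T x) := by
    simpa only [map_smul, hrep] using hx.mapL T
  constructor
  · rintro hinj c ⟨hc, hc0⟩
    obtain ⟨x, hx⟩ := hM.isBessel.summable_smul hc
    have hx0 : x = 0 := hinj (((hT hx).unique hc0).trans T.map_zero.symm)
    exact ⟨hc, hx0 ▸ hx⟩
  · intro hker
    refine (injective_iff_map_eq_zero T).2 fun x hx => ?_
    obtain ⟨c, hc, hcx⟩ := hM.exists_hasSum x
    exact hcx.unique (hker ⟨hc, hx ▸ hT hcx⟩).2

theorem stmt18 {H : Type*} [NormedAddCommGroup H] [InnerProductSpace ℂ H]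
    [CompleteSpace H] (f : ℕ → H)
    (hF : IsBessel f)
    (hM : IsFrame (fun n => f n + f (n + 1)))
    (T : H →L[ℂ] H)
    (hrep : ∀ n : ℕ, T (f n + f (n + 1)) = f (n + 2)) :
    Function.Injective T ↔
      synthKer (fun n => f (n + 2)) ⊆ synthKer (fun n => f n + f (n + 1)) :=
  stmt18_general f hM T hrep
end
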